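/- arXiv:math/0512385 — 6 statements merged into one kernel-verified Lean document; each statement's English description precedes it below -/
import Mathlib

section
/- Let u_0, u_1, …, u_n ∈ ℤ^n be affinely independent and let P = conv(u_0, …, u_n) ⊆ ℝ^n. Assume: (a) P ∩ ℤ^n = {u_0, …, u_n}; and (b) the additive monoid η ∩ ℤ^n, where η ⊆ ℝ^n is the convex cone generated by the translated polytope P − u_0, is generated by the finite set {p − u_0 : p ∈ P ∩ ℤ^n}. Then (u_1 − u_0, …, u_n − u_0) is a ℤ-basis of ℤ^n; that is, P is the image of the standard simplex conv(0, e_1, …, e_n) under an affine transformation inducing an automorphism of the lattice ℤ^n. (This is the equality case def(P) = dim P of the paper's remark after Definition 2.5, under the running semigroup hypothesis of Lemma 1.3.) -/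
/-!
The differences `v k = u (k+1) - u 0` are linearly independent, so it suffices that they span
`ℤ^n`. Given `z ∈ ℤ^n`, write `z = ∑ c k • v k` over `ℝ` and shift by a large multiple of
`∑ v k`: the lattice point `w = z + N • ∑ v k` has nonnegative coordinates in the basis `v`,
so it lies in the cone `η`. By (b), `w` is a sum of lattice points of `P - u 0`, which by (a)
are the `u k - u 0`, all in the `ℤ`-span of the `v k`; hence so is `z = w - N • ∑ v k`.
-/

open Set Submodule

def intCastPi (κ : Type*) : (κ → ℤ) →ₗ[ℤ] κ → ℝ :=
  (Int.castAddHom ℝ).toIntLinearMap.compLeft κ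

@[simp]
theorem intCastPi_apply {κ : Type*} (z : κ → ℤ) (k : κ) : intCastPi κ z k = z k := rfl

theorem intCastPi_injective (κ : Type*) : Function.Injective (intCastPi κ) :=
  fun _ _ h => funext fun k => Int.cast_injective (congrFun h k)

def coneOver {E : Type*} [AddCommGroup E] [Module ℝ E] (K : Set E) (o : E) : Set E :=
  {x | ∃ c : ℝ, 0 ≤ c ∧ ∃ y ∈ K, x = c • (y - o)}

theorem sum_smul_sub_mem_coneOver_convexHull {ι E : Type*} [Fintype ι] [AddCommGroup E]
    [Module ℝ E] {s : Set E} {o : E} (ho : o ∈ s) {p : ι → E} (hp : ∀ i, p i ∈ s)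
    {d : ι → ℝ} (hd : ∀ i, 0 ≤ d i) :
    ∑ i, d i • (p i - o) ∈ coneOver (convexHull ℝ s) o := by
  rcases (Finset.sum_nonneg fun i _ => hd i).eq_or_lt with hsum | hsum
  · have hd0 : ∀ i, d i = 0 := fun i =>
      (Finset.sum_eq_zero_iff_of_nonneg fun i _ => hd i).1 hsum.symm i (Finset.mem_univ i)
    exact ⟨0, le_rfl, o, subset_convexHull ℝ s ho, by simp [hd0]⟩
  · refine ⟨∑ i, d i, hsum.le, Finset.univ.centerMass d p,
      Finset.univ.centerMass_mem_convexHull (fun i _ => hd i) hsum fun i _ => hp i, ?_⟩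
    rw [Finset.centerMass, smul_sub, smul_smul, mul_inv_cancel₀ hsum.ne', one_smul,
      Finset.sum_smul, ← Finset.sum_sub_distrib]
    simp only [smul_sub]

theorem AffineIndependent.linearIndependent_succ_vsub {k V P : Type*} [Ring k]
    [AddCommGroup V] [Module k V] [AddTorsor V P] {n : ℕ} {p : Fin (n + 1) → P}
    (hp : AffineIndependent k p) : LinearIndependent k fun i : Fin n => p i.succ -ᵥ p 0 :=
  ((affineIndependent_iff_linearIndependent_vsub k p 0).1 hp).comp
    (fun i : Fin n => (⟨i.succ, i.succ_ne_zero⟩ : {j : Fin (n + 1) // j ≠ 0}))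
    fun _ _ h => Fin.succ_injective n (congrArg Subtype.val h)

theorem sub_mem_span_range_succ_sub {M : Type*} [AddCommGroup M] {n : ℕ}
    (u : Fin (n + 1) → M) (k : Fin (n + 1)) :
    u k - u 0 ∈ span ℤ (range fun j : Fin n => u j.succ - u 0) := by
  cases k using Fin.cases with
  | zero => simp
  | succ j => exact subset_span ⟨j, rfl⟩

theorem span_int_eq_top_of_nonneg_combination_mem {ι κ : Type*} [Fintype ι] {v : ι → κ → ℤ}
    (hspan : span ℝ (range (intCastPi κ ∘ v)) = ⊤)
    (hcone : ∀ (w : κ → ℤ) (d : ι → ℝ), (∀ i, 0 ≤ d i) →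
      intCastPi κ w = ∑ i, d i • intCastPi κ (v i) → w ∈ span ℤ (range v)) :
    span ℤ (range v) = ⊤ := by
  refine eq_top_iff'.2 fun z => ?_
  obtain ⟨c, hc⟩ := (mem_span_range_iff_exists_fun ℝ).1 (hspan ▸ mem_top : intCastPi κ z ∈ _)
  choose N hN using fun i => exists_nat_ge (-c i)
  obtain ⟨N, hNle⟩ := Finite.exists_le N
  have hshift : z + (N : ℤ) • ∑ i, v i ∈ span ℤ (range v) := by
    refine hcone _ (fun i => c i + N) (fun i => ?_) ?_
    · have := (hN i).trans (Nat.cast_le.2 (hNle i))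
      linarith
    · simp only [map_add, map_nsmul, map_sum, add_smul, Finset.sum_add_distrib,
        ← hc, ← Finset.smul_sum, Function.comp, Nat.cast_smul_eq_nsmul]
  have hsum : (N : ℤ) • ∑ i, v i ∈ span ℤ (range v) :=
    smul_mem _ _ (sum_mem fun i _ => subset_span ⟨i, rfl⟩)
  simpa using sub_mem hshift hsum

/-- Let `u 0, …, u n ∈ ℤ^n` be affinely independent and `P = conv(u 0, …, u n) ⊆ ℝ^n`.
If (a) the only lattice points of `P` are its vertices, and (b) the additive monoid of lattice
points of the cone `η` over `P - u 0` is generated by `{p - u 0 : p ∈ P ∩ ℤ^n}`, then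
`(u 1 - u 0, …, u n - u 0)` is a `ℤ`-basis of `ℤ^n`. -/
theorem stmt_1 (n : ℕ) (u : Fin (n + 1) → (Fin n → ℤ))
    (U : Fin (n + 1) → (Fin n → ℝ)) (hU : ∀ k i, U k i = (u k i : ℝ))
    (hind : AffineIndependent ℝ U)
    (P : Set (Fin n → ℝ)) (hP : P = convexHull ℝ (Set.range U))
    (hlatP : {x ∈ P | ∀ i, ∃ m : ℤ, x i = (m : ℝ)} = Set.range U)
    (η : Set (Fin n → ℝ))
    (hη : η = {x | ∃ c : ℝ, 0 ≤ c ∧ ∃ y ∈ P, x = c • (y - U 0)})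
    (hgen : (AddSubmonoid.closure
        {x : Fin n → ℝ | ∃ p ∈ P, (∀ i, ∃ m : ℤ, p i = (m : ℝ)) ∧ x = p - U 0} :
          Set (Fin n → ℝ)) =
      {x ∈ η | ∀ i, ∃ m : ℤ, x i = (m : ℝ)}) :
    ∃ b : Module.Basis (Fin n) ℤ (Fin n → ℤ), ∀ k : Fin n, b k = u k.succ - u 0 := by
  set S := {x : Fin n → ℝ | ∃ p ∈ P, (∀ i, ∃ m : ℤ, p i = (m : ℝ)) ∧ x = p - U 0}
  set v : Fin n → Fin n → ℤ := fun k => u k.succ - u 0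
  have hu_cast : ∀ k, intCastPi (Fin n) (u k) = U k := fun k => funext fun i => (hU k i).symm
  have hv_cast : ∀ k, intCastPi (Fin n) (v k) = U k.succ - U 0 := fun k => by simp [v, hu_cast]
  have hVind : LinearIndependent ℝ (intCastPi (Fin n) ∘ v) := by
    simpa only [Function.comp_def, hv_cast, vsub_eq_sub] using hind.linearIndependent_succ_vsub
  have hvind : LinearIndependent ℤ v := (hVind.restrict_scalars' ℤ).of_comp _
  have hgen_le : AddSubmonoid.closure S ≤ ((span ℤ (range v)).map (intCastPi (Fin n))).toAddSubmonoid := by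
    refine AddSubmonoid.closure_le.2 ?_
    rintro _ ⟨p, hpP, hplat, rfl⟩
    obtain ⟨k, rfl⟩ : p ∈ range U := hlatP ▸ ⟨hpP, hplat⟩
    exact ⟨u k - u 0, sub_mem_span_range_succ_sub u k, by simp [hu_cast]⟩
  have hspan : span ℤ (range v) = ⊤ := by
    refine span_int_eq_top_of_nonneg_combination_mem
      (hVind.span_eq_top_of_card_eq_finrank' (by simp)) fun w d hd hw => ?_
    have hwη : intCastPi (Fin n) w ∈ η := by
      rw [hη, hP, hw]
      simp only [hv_cast]
      exact sum_smul_sub_mem_coneOver_convexHull (mem_range_self (f := U) 0)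
        (fun k => mem_range_self k.succ) hd
    have hw_closure : intCastPi (Fin n) w ∈ (AddSubmonoid.closure S : Set (Fin n → ℝ)) :=
      hgen ▸ ⟨hwη, fun i => ⟨w i, rfl⟩⟩
    obtain ⟨w', hw', hw'w⟩ := hgen_le hw_closure
    rwa [← intCastPi_injective _ hw'w]
  exact ⟨Module.Basis.mk hvind hspan.ge, fun k => Module.Basis.mk_apply _ _ k⟩
end

section
/- Let π : ℝ^n → ℝ^m be a linear map and let K_1, …, K_l be nonempty convex subsets of ℝ^n such that π(K_i) = {v_i} is a single point for each i, the points v_1, …, v_l are pairwise distinct, and each v_i is an extreme point of conv{v_1, …, v_l}. Then the set of extreme points of conv(K_1 ∪ … ∪ K_l) is exactly the union over i of the sets of extreme points of the K_i. (This is the vertex-counting step in the proof of Lemma 3.6: the vertices of the π-twisted Cayley sum are precisely the union of the vertices of the R_i's.) -/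
/-!
The fibre of `C = conv (⋃ j, K j)` over the extreme point `v i` is a face of `C`, and a face of a
convex hull is the convex hull of the generators it contains. Over `v i` these are exactly the
points of `K i`, so each `K i` is a face of `C`. The extreme points of a face are the extreme points
of `C` lying in it, and every extreme point of `C` is a generator.
-/

open Set

section Faces

variable {𝕜 E F : Type*} [Field 𝕜] [LinearOrder 𝕜] [IsStrictOrderedRing 𝕜]
  [AddCommGroup E] [Module 𝕜 E] [AddCommGroup F] [Module 𝕜 F]

theorem IsExtreme.inter_preimage {S B : Set F} {A : Set E} (f : E →ᵃ[𝕜] F)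
    (hB : IsExtreme 𝕜 S B) (hA : MapsTo f A S) : IsExtreme 𝕜 A (A ∩ f ⁻¹' B) := by
  refine ⟨inter_subset_left, fun y hy z hz x ⟨hxA, hxB⟩ hx ↦ ⟨hy, ?_⟩⟩
  have hfx : f x ∈ openSegment 𝕜 (f y) (f z) := image_openSegment 𝕜 f y z ▸ mem_image_of_mem f hx
  exact hB.left_mem_of_mem_openSegment (hA hy) (hA hz) hxB hfx

theorem IsExtreme.subset_convexHull_inter {s B : Set E} (h : IsExtreme 𝕜 (convexHull 𝕜 s) B) :
    B ⊆ convexHull 𝕜 (s ∩ B) := by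
  let G := {y | y ∈ convexHull 𝕜 s ∧ (y ∈ B → y ∈ convexHull 𝕜 (s ∩ B))}
  have hsG : s ⊆ G := fun x hx ↦
    ⟨subset_convexHull 𝕜 s hx, fun hxB ↦ subset_convexHull 𝕜 _ ⟨hx, hxB⟩⟩
  have hG : Convex 𝕜 G := by
    refine convex_iff_openSegment_subset.2 fun y ⟨hy, hyB⟩ z ⟨hz, hzB⟩ w hw ↦
      ⟨(convex_convexHull 𝕜 s).openSegment_subset hy hz hw, fun hwB ↦ ?_⟩
    exact (convex_convexHull 𝕜 _).openSegment_subset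
      (hyB (h.left_mem_of_mem_openSegment hy hz hwB hw))
      (hzB (h.right_mem_of_mem_openSegment hy hz hwB hw)) hw
  exact fun x hx ↦ (convexHull_min hsG hG (h.subset hx)).2 hx

theorem extremePoints_convexHull_iUnion {ι : Type*} {K : ι → Set E}
    (hK : ∀ i, IsExtreme 𝕜 (convexHull 𝕜 (⋃ j, K j)) (K i)) :
    (convexHull 𝕜 (⋃ j, K j)).extremePoints 𝕜 = ⋃ i, (K i).extremePoints 𝕜 := by
  simp_rw [fun i ↦ (hK i).extremePoints_eq, ← iUnion_inter]
  exact (inter_eq_right.2 extremePoints_convexHull_subset).symm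

theorem isExtreme_convexHull_iUnion_of_cayley {ι : Type*} (f : E →ᵃ[𝕜] F) {K : ι → Set E}
    {v : ι → F} (hK : ∀ i, Convex 𝕜 (K i)) (hf : ∀ i, MapsTo f (K i) {v i})
    (hv : Function.Injective v) (hext : ∀ i, v i ∈ (convexHull 𝕜 (range v)).extremePoints 𝕜)
    (i : ι) : IsExtreme 𝕜 (convexHull 𝕜 (⋃ j, K j)) (K i) := by
  set C := convexHull 𝕜 (⋃ j, K j)
  have hC : MapsTo f C (convexHull 𝕜 (range v)) := by
    rw [mapsTo_iff_image_subset, f.image_convexHull]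
    refine convexHull_mono ?_
    rintro _ ⟨x, hx, rfl⟩
    obtain ⟨j, hj⟩ := mem_iUnion.1 hx
    exact ⟨j, (mem_singleton_iff.1 (hf j hj)).symm⟩
  have hfibre : IsExtreme 𝕜 C (C ∩ f ⁻¹' {v i}) :=
    (isExtreme_singleton.2 (hext i)).inter_preimage f hC
  have hgen : (⋃ j, K j) ∩ (C ∩ f ⁻¹' {v i}) ⊆ K i := by
    rintro x ⟨hx, -, hfx⟩
    obtain ⟨j, hj⟩ := mem_iUnion.1 hx
    rwa [← hv ((mem_singleton_iff.1 (hf j hj)).symm.trans hfx)]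
  have hKi : C ∩ f ⁻¹' {v i} = K i :=
    (hfibre.subset_convexHull_inter.trans (convexHull_min hgen (hK i))).antisymm
      fun x hx ↦ ⟨subset_convexHull 𝕜 _ (mem_iUnion_of_mem i hx), hf i hx⟩
  exact hKi ▸ hfibre

end Faces

theorem stmt_5_general (n m l : ℕ) (π : (Fin n → ℝ) →ₗ[ℝ] (Fin m → ℝ))
    (K : Fin l → Set (Fin n → ℝ)) (v : Fin l → (Fin m → ℝ))
    (hconv : ∀ i, Convex ℝ (K i))
    (himg : ∀ i, π '' K i = {v i})
    (hvinj : Function.Injective v)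
    (hext : ∀ i, v i ∈ Set.extremePoints ℝ (convexHull ℝ (Set.range v))) :
    Set.extremePoints ℝ (convexHull ℝ (⋃ j, K j)) = ⋃ i, Set.extremePoints ℝ (K i) := by
  exact extremePoints_convexHull_iUnion <| isExtreme_convexHull_iUnion_of_cayley π.toAffineMap
    hconv (fun i ↦ mapsTo_iff_image_subset.2 (himg i).subset) hvinj hext

/-- Cayley position: `π : ℝ^n → ℝ^m` linear, `K i` nonempty convex sets with `π(K i) = {v i}`,
the `v i` pairwise distinct and each an extreme point of `conv(range v)`.
Then the extreme points of `conv(⋃ K i)` are exactly the union of the extreme points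
of the `K i`. -/
theorem stmt_5 (n m l : ℕ) (π : (Fin n → ℝ) →ₗ[ℝ] (Fin m → ℝ))
    (K : Fin l → Set (Fin n → ℝ)) (v : Fin l → (Fin m → ℝ))
    (hne : ∀ i, (K i).Nonempty) (hconv : ∀ i, Convex ℝ (K i))
    (himg : ∀ i, π '' K i = {v i})
    (hvinj : Function.Injective v)
    (hext : ∀ i, v i ∈ Set.extremePoints ℝ (convexHull ℝ (Set.range v))) :
    Set.extremePoints ℝ (convexHull ℝ (⋃ j, K j)) = ⋃ i, Set.extremePoints ℝ (K i) :=
  stmt_5_general n m l π K v hconv himg hvinj hext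
end

section
/- Let e_0, e_1, …, e_n ∈ ℤ^n be vectors such that for every k ∈ {0, …, n} the family (e_j)_{j ≠ k} is linearly independent over ℚ. Let a_0, …, a_n be positive integers and assume the following Cartier-type condition: for every i ∈ {0, …, n} and every k ≠ i there exists a ℤ-linear map φ : ℤ^n → ℤ with φ(e_i) = a_i and φ(e_j) = 0 for all j ∉ {i, k}. Let I ⊊ {0, …, n} be a proper subset and let v ∈ ℤ^n be such that v = Σ_{i ∈ I} b_i e_i with b_i ∈ ℚ, b_i > 0 for all i ∈ I. Then for every i ∈ I the number a_i b_i is a positive integer, i.e. v = Σ_{i ∈ I} (m_i / a_i) e_i with m_i ∈ ℤ_{>0}. (Lattice-theoretic form of Lemma 2.2: on a ℚ-factorial toric variety of Picard number one with ray generators e_0, …, e_n, the integer a_i is the least positive integer such that a_i D_{e_i} is Cartier, and the Cartier-type condition expresses local principality of a_i D_{e_i} on each maximal affine chart.) -/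
/-!
Pick `k ∉ I`. The Cartier form `φ` attached to `(i, k)` vanishes on every `e j` with `j ∈ I`,
`j ≠ i`; extending it `ℚ`-linearly and applying it to `v = ∑ b j • e j` gives
`a i * b i = φ v`, an integer, which is positive because `a i` and `b i` are.
-/

open Finset

section IntegralLinearForm

variable {ι κ : Type*} [Fintype ι] [DecidableEq ι]

theorem LinearMap.apply_eq_dotProduct_single {R : Type*} [CommSemiring R]
    (φ : (ι → R) →ₗ[R] R) (w : ι → R) :
    φ w = w ⬝ᵥ fun t => φ (Pi.single t 1) := by
  conv_lhs => rw [pi_eq_sum_univ' w, map_sum]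
  simp only [map_smul, smul_eq_mul, dotProduct]

theorem LinearMap.intCast_apply_eq_dotProduct {K : Type*} [CommRing K]
    (φ : (ι → ℤ) →ₗ[ℤ] ℤ) (w : ι → ℤ) :
    (φ w : K) = (fun t => (w t : K)) ⬝ᵥ fun t => (φ (Pi.single t 1) : K) := by
  rw [φ.apply_eq_dotProduct_single]
  exact RingHom.map_dotProduct (Int.castRingHom K) _ _

theorem LinearMap.intCast_apply_eq_mul_of_eq_sum {K : Type*} [CommRing K]
    (φ : (ι → ℤ) →ₗ[ℤ] ℤ) {s : Finset κ} {e : κ → ι → ℤ} {v : ι → ℤ} {b : κ → K} {i : κ}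
    (hv : (fun t => (v t : K)) = ∑ j ∈ s, b j • fun t => (e j t : K)) (hi : i ∈ s)
    (hφ : ∀ j ∈ s, j ≠ i → φ (e j) = 0) :
    (φ v : K) = b i * φ (e i) := by
  rw [φ.intCast_apply_eq_dotProduct, hv, sum_dotProduct, sum_eq_single_of_mem i hi]
  · rw [smul_dotProduct, ← φ.intCast_apply_eq_dotProduct, smul_eq_mul]
  · intro j hj hji
    rw [smul_dotProduct, ← φ.intCast_apply_eq_dotProduct, hφ j hj hji, Int.cast_zero, smul_zero]

end IntegralLinearForm

theorem stmt_7_general (n : ℕ) (e : Fin (n + 1) → (Fin n → ℤ)) (a : Fin (n + 1) → ℤ)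
    (ha : ∀ i, 0 < a i)
    (hcartier : ∀ i k : Fin (n + 1), k ≠ i →
      ∃ φ : (Fin n → ℤ) →ₗ[ℤ] ℤ, φ (e i) = a i ∧ ∀ j, j ≠ i → j ≠ k → φ (e j) = 0)
    (I : Finset (Fin (n + 1))) (hI : I ≠ Finset.univ)
    (v : Fin n → ℤ) (b : Fin (n + 1) → ℚ) (hb : ∀ i ∈ I, 0 < b i)
    (hv : (fun i => (v i : ℚ)) = ∑ i ∈ I, b i • (fun j => (e i j : ℚ))) :
    ∀ i ∈ I, ∃ m : ℤ, 0 < m ∧ (a i : ℚ) * b i = (m : ℚ) := by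
  intro i hi
  obtain ⟨k, hk⟩ : ∃ k, k ∉ I := by
    simpa [eq_univ_iff_forall] using hI
  obtain ⟨φ, hφi, hφ⟩ := hcartier i k (ne_of_mem_of_not_mem hi hk).symm
  have hφv : (a i : ℚ) * b i = φ v := by
    rw [φ.intCast_apply_eq_mul_of_eq_sum hv hi
      (fun j hj hji => hφ j hji (ne_of_mem_of_not_mem hj hk)), hφi, mul_comm]
  refine ⟨φ v, ?_, hφv⟩
  have hpos : (0 : ℚ) < (a i : ℚ) * b i := mul_pos (by exact_mod_cast ha i) (hb i hi)
  exact_mod_cast hφv ▸ hpos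

/-- Lattice-theoretic form of Lemma 2.2: `e 0, …, e n ∈ ℤ^n` such that any `n` of them are
linearly independent over `ℚ`, `a i` positive integers satisfying the Cartier-type condition.
If `I` is a proper subset of `{0, …, n}` and `v ∈ ℤ^n` with `v = ∑_{i ∈ I} b i • e i`,
`b i ∈ ℚ`, `b i > 0`, then `a i * b i` is a positive integer for every `i ∈ I`. -/
theorem stmt_7 (n : ℕ) (e : Fin (n + 1) → (Fin n → ℤ)) (a : Fin (n + 1) → ℤ)
    (ha : ∀ i, 0 < a i)
    (hind : ∀ k : Fin (n + 1),
      LinearIndependent ℚ (fun j : {j : Fin (n + 1) // j ≠ k} =>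
        (fun i => (e j i : ℚ) : Fin n → ℚ)))
    (hcartier : ∀ i k : Fin (n + 1), k ≠ i →
      ∃ φ : (Fin n → ℤ) →ₗ[ℤ] ℤ, φ (e i) = a i ∧ ∀ j, j ≠ i → j ≠ k → φ (e j) = 0)
    (I : Finset (Fin (n + 1))) (hI : I ≠ Finset.univ)
    (v : Fin n → ℤ) (b : Fin (n + 1) → ℚ) (hb : ∀ i ∈ I, 0 < b i)
    (hv : (fun i => (v i : ℚ)) = ∑ i ∈ I, b i • (fun j => (e i j : ℚ))) :
    ∀ i ∈ I, ∃ m : ℤ, 0 < m ∧ (a i : ℚ) * b i = (m : ℚ) :=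
  stmt_7_general n e a ha hcartier I hI v b hb hv
end

section
/- Let ε_1, …, ε_n be the standard basis of ℚ^n, let a_1, …, a_n be positive integers, and let P = conv(0, a_1 ε_1, …, a_n ε_n) ⊆ ℚ^n. Fix r with 1 ≤ r ≤ n and set Q_0 = conv(a_1 ε_1, …, a_r ε_r) and Q_1 = conv(0, a_{r+1} ε_{r+1}, …, a_n ε_n). Let M ⊆ ℚ^n be a subgroup such that: (a) M is generated as a group by P ∩ M; and (b) P ∩ M = (Q_0 ∩ M) ∪ (Q_1 ∩ M). Then for every u = (u_1, …, u_n) ∈ M one has Σ_{i=1}^r u_i / a_i ∈ ℤ; that is, the linear functional v_0 = Σ_{i=1}^r (1/a_i) ε_i^* takes integer values on M. (This is the key integrality step in the proof of the implication (vi) ⇒ (ii) of Theorem 2.6.) -/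
/-!
The functional `v₀ x = ∑_{i < r} x i / a i` is `1` at every vertex `a i • εᵢ` of `Q₀` and `0` at
every vertex of `Q₁`, hence, being linear, constantly `1` on `Q₀` and `0` on `Q₁`. By the covering hypothesis it is integral on `P ∩ M`, and therefore on the group `M`
that `P ∩ M` generates.
-/

open Finset

section FaceFunctional

variable {K ι : Type*} [Field K]

def faceFunctional (a : ι → K) (s : Finset ι) : (ι → K) →ₗ[K] K where
  toFun x := ∑ i ∈ s, x i / a i
  map_add' x y := by simp only [Pi.add_apply, add_div, sum_add_distrib]
  map_smul' c x := by simp only [Pi.smul_apply, smul_eq_mul, mul_div_assoc, mul_sum, RingHom.id_apply]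

@[simp]
theorem faceFunctional_apply (a : ι → K) (s : Finset ι) (x : ι → K) :
    faceFunctional a s x = ∑ i ∈ s, x i / a i :=
  rfl

theorem faceFunctional_single [DecidableEq ι] {a : ι → K} (s : Finset ι) {j : ι} (hj : a j ≠ 0) :
    faceFunctional a s (Pi.single j (a j)) = if j ∈ s then 1 else 0 := by
  have hterm : ∀ i, (Pi.single j (a j) : ι → K) i / a i = if j = i then 1 else 0 := by
    intro i
    rcases eq_or_ne j i with rfl | hne
    · simp [hj]
    · simp [hne.symm, hne]
  simp only [faceFunctional_apply, hterm, sum_ite_eq]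

end FaceFunctional

theorem LinearMap.eq_of_mem_convexHull {𝕜 E : Type*} [Field 𝕜] [LinearOrder 𝕜]
    [IsStrictOrderedRing 𝕜] [AddCommGroup E] [Module 𝕜 E] (f : E →ₗ[𝕜] 𝕜) {s : Set E} {c : 𝕜}
    (hs : ∀ x ∈ s, f x = c) {x : E} (hx : x ∈ convexHull 𝕜 s) : f x = c :=
  convexHull_min hs ((convex_singleton c).linear_preimage f) hx

theorem exists_intCast_eq_of_mem_closure {G R : Type*} [AddGroup G] [AddGroupWithOne R]
    (f : G →+ R) {S : Set G} (hS : ∀ x ∈ S, ∃ z : ℤ, f x = z) {x : G}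
    (hx : x ∈ AddSubgroup.closure S) : ∃ z : ℤ, f x = z := by
  induction hx using AddSubgroup.closure_induction with
  | mem x hx => exact hS x hx
  | zero => exact ⟨0, by simp⟩
  | add x y _ _ hx hy =>
    obtain ⟨m, hm⟩ := hx
    obtain ⟨k, hk⟩ := hy
    exact ⟨m + k, by simp [hm, hk]⟩
  | neg x _ hx =>
    obtain ⟨m, hm⟩ := hx
    exact ⟨-m, by simp [hm]⟩

theorem stmt_8_general (n : ℕ) (a : Fin n → ℤ) (ha : ∀ i, 0 < a i)
    (r : ℕ)
    (M : AddSubgroup (Fin n → ℚ))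
    (P : Set (Fin n → ℚ))
    (Q0 : Set (Fin n → ℚ))
    (hQ0 : Q0 = convexHull ℚ {x | ∃ i : Fin n, (i : ℕ) < r ∧ x = Pi.single i (a i : ℚ)})
    (Q1 : Set (Fin n → ℚ))
    (hQ1 : Q1 = convexHull ℚ
      ({0} ∪ {x | ∃ i : Fin n, r ≤ (i : ℕ) ∧ x = Pi.single i (a i : ℚ)}))
    (hgen : AddSubgroup.closure (P ∩ (M : Set (Fin n → ℚ))) = M)
    (hcover : P ∩ (M : Set (Fin n → ℚ)) =
      (Q0 ∩ (M : Set (Fin n → ℚ))) ∪ (Q1 ∩ (M : Set (Fin n → ℚ)))) :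
    ∀ u ∈ M, ∃ z : ℤ,
      ∑ i ∈ Finset.univ.filter (fun i : Fin n => (i : ℕ) < r), u i / (a i : ℚ) = (z : ℚ) := by
  set v₀ := faceFunctional (fun i => (a i : ℚ)) (univ.filter fun i : Fin n => (i : ℕ) < r)
  have hvertex (i : Fin n) : v₀ (Pi.single i (a i : ℚ)) = if (i : ℕ) < r then 1 else 0 := by
    exact (faceFunctional_single _ (Int.cast_ne_zero.2 (ha i).ne')).trans (by simp)
  have hQ0v : ∀ x ∈ Q0, v₀ x = 1 := fun x hx => by
    refine v₀.eq_of_mem_convexHull ?_ (hQ0 ▸ hx)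
    rintro _ ⟨i, hi, rfl⟩
    simp [hvertex, hi]
  have hQ1v : ∀ x ∈ Q1, v₀ x = 0 := fun x hx => by
    refine v₀.eq_of_mem_convexHull ?_ (hQ1 ▸ hx)
    rintro _ (rfl | ⟨i, hi, rfl⟩)
    · exact map_zero v₀
    · simp [hvertex, hi.not_gt]
  intro u hu
  refine exists_intCast_eq_of_mem_closure v₀.toAddMonoidHom ?_ (hgen ▸ hu)
  rintro x hx
  rcases hcover ▸ hx with ⟨hx0, -⟩ | ⟨hx1, -⟩
  · exact ⟨1, by simp [hQ0v x hx0]⟩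
  · exact ⟨0, by simp [hQ1v x hx1]⟩

/-- Key integrality step in (vi) ⇒ (ii) of Theorem 2.6: for the simplex
`P = conv(0, a 1 • ε 1, …, a n • ε n) ⊆ ℚ^n` and a subgroup `M` generated by `P ∩ M`, if the
lattice points of `P` in `M` lie on the two disjoint faces `Q 0 = conv(a i • ε i, i ≤ r)` and
`Q 1 = conv(0, a i • ε i, i > r)`, then the functional `∑_{i ≤ r} (1 / a i) ε i *` takes
integer values on `M`. -/
theorem stmt_8 (n : ℕ) (a : Fin n → ℤ) (ha : ∀ i, 0 < a i)
    (r : ℕ) (hr1 : 1 ≤ r) (hrn : r ≤ n)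
    (M : AddSubgroup (Fin n → ℚ))
    (P : Set (Fin n → ℚ))
    (hP : P = convexHull ℚ ({0} ∪ Set.range fun i : Fin n => Pi.single i (a i : ℚ)))
    (Q0 : Set (Fin n → ℚ))
    (hQ0 : Q0 = convexHull ℚ {x | ∃ i : Fin n, (i : ℕ) < r ∧ x = Pi.single i (a i : ℚ)})
    (Q1 : Set (Fin n → ℚ))
    (hQ1 : Q1 = convexHull ℚ
      ({0} ∪ {x | ∃ i : Fin n, r ≤ (i : ℕ) ∧ x = Pi.single i (a i : ℚ)}))
    (hgen : AddSubgroup.closure (P ∩ (M : Set (Fin n → ℚ))) = M)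
    (hcover : P ∩ (M : Set (Fin n → ℚ)) =
      (Q0 ∩ (M : Set (Fin n → ℚ))) ∪ (Q1 ∩ (M : Set (Fin n → ℚ)))) :
    ∀ u ∈ M, ∃ z : ℤ,
      ∑ i ∈ Finset.univ.filter (fun i : Fin n => (i : ℕ) < r), u i / (a i : ℚ) = (z : ℚ) :=
  stmt_8_general n a ha r M P Q0 hQ0 Q1 hQ1 hgen hcover
end

section
/- Let s ⊂ ℤ^n be an affinely independent set with exactly n+1 elements and let P = conv(s) ⊆ ℝ^n. Suppose there exist disjoint nonempty subsets t_0, t_1 ⊆ s with t_0 ∪ t_1 = s such that P ∩ ℤ^n ⊆ conv(t_0) ∪ conv(t_1). Then there do not exist a finite set S ⊆ ℤ^n, a point v ∈ ℤ^n, and an integer r ≥ 2 such that P = v + r·conv(S). (This is the step in the proof of Theorem 2.6, (vi) ⇒ (ii), showing that a lattice simplex with positive lattice defect cannot be a nontrivial multiple r·P' of a lattice polytope P', because for r ≥ 2 every edge of r·P' contains a lattice point in its relative interior, while an edge joining Q_0 to Q_1 can contain lattice points only at its endpoints.) -/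
/-!
Write `P = v + r • conv S`. The points `v + r • w`, `w ∈ S`, are lattice points of `P` whose
convex hull is `P`, so neither `conv t0` nor `conv t1` contains all of them: there are
`w₀, w₁ ∈ S` with `p₀ = v + r • w₀ ∈ conv t0` and `p₁ = v + r • w₁ ∈ conv t1`. The point
`p₀ + (w₁ - w₀)`, at parameter `1 / r` on the segment from `p₀` to `p₁`, is again a lattice
point of `P`. As `s` is affinely independent, the affine spans of `t0` and `t1` are disjoint, so
the line through `p₀` and `p₁` meets each of them only once, and this point lies in neither
`conv t0` nor `conv t1`.
-/

open Set AffineMap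

theorem AffineSubspace.right_mem_of_lineMap_mem {k V P : Type*} [Field k] [AddCommGroup V]
    [Module k V] [AddTorsor V P] {Q : AffineSubspace k P} {p₀ p₁ : P} {c : k}
    (hc : c ≠ 0) (h : lineMap p₀ p₁ c ∈ Q) (h₀ : p₀ ∈ Q) : p₁ ∈ Q := by
  have := lineMap_mem (Q := Q) c⁻¹ h₀ h
  rwa [lineMap_lineMap_right, inv_mul_cancel₀ hc, lineMap_apply_one] at this

theorem AffineSubspace.left_mem_of_lineMap_mem {k V P : Type*} [Field k] [AddCommGroup V]
    [Module k V] [AddTorsor V P] {Q : AffineSubspace k P} {p₀ p₁ : P} {c : k}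
    (hc : c ≠ 1) (h : lineMap p₀ p₁ c ∈ Q) (h₁ : p₁ ∈ Q) : p₀ ∈ Q := by
  rw [← lineMap_apply_one_sub] at h
  exact right_mem_of_lineMap_mem (sub_ne_zero.2 hc.symm) h h₁

theorem AffineSubspace.lineMap_notMem_union_of_disjoint {k V P : Type*} [Field k]
    [AddCommGroup V] [Module k V] [AddTorsor V P] {A₀ A₁ : AffineSubspace k P}
    (hd : Disjoint (A₀ : Set P) A₁) {p₀ p₁ : P} (h₀ : p₀ ∈ A₀) (h₁ : p₁ ∈ A₁) {c : k}
    (hc₀ : c ≠ 0) (hc₁ : c ≠ 1) : lineMap p₀ p₁ c ∉ (A₀ : Set P) ∪ A₁ := by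
  rintro (h | h)
  · exact hd.ne_of_mem (right_mem_of_lineMap_mem hc₀ h h₀) h₁ rfl
  · exact hd.ne_of_mem h₀ (left_mem_of_lineMap_mem hc₁ h h₁) rfl

theorem AffineIndependent.disjoint_affineSpan_of_subset {k V P : Type*} [Ring k] [Nontrivial k]
    [AddCommGroup V] [Module k V] [AddTorsor V P] {s t₀ t₁ : Set P}
    (hs : AffineIndependent k ((↑) : s → P)) (ht₀ : t₀ ⊆ s) (ht₁ : t₁ ⊆ s)
    (hd : Disjoint t₀ t₁) : Disjoint (affineSpan k t₀ : Set P) (affineSpan k t₁) := by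
  have := hs.affineSpan_disjoint_of_disjoint (hd.preimage ((↑) : s → P))
  rwa [Subtype.image_preimage_coe, Subtype.image_preimage_coe, inter_eq_right.2 ht₀,
    inter_eq_right.2 ht₁] at this

theorem image_add_smul_convexHull {k E : Type*} [CommRing k] [PartialOrder k] [AddCommGroup E]
    [Module k E] (v : E) (r : k) (S : Set E) :
    (fun x ↦ v + r • x) '' convexHull k S = convexHull k ((fun x ↦ v + r • x) '' S) := by
  have hg : (fun x : E ↦ v + r • x) =
      ⇑(AffineMap.const k E v + (r • LinearMap.id : E →ₗ[k] E).toAffineMap) := by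
    ext; simp
  rw [hg]
  exact AffineMap.image_convexHull _ S

theorem exists_mem_inter_convexHull_of_subset_union {k E : Type*} [Ring k] [PartialOrder k]
    [AddCommGroup E] [Module k E] {T t₀ t₁ : Set E}
    (hT : T ⊆ convexHull k t₀ ∪ convexHull k t₁) (ht₀ : t₀ ⊆ convexHull k T)
    (hne : t₀.Nonempty) (hd : Disjoint (affineSpan k t₀ : Set E) (affineSpan k t₁)) :
    ∃ p ∈ T, p ∈ convexHull k t₀ := by
  by_contra! h
  obtain ⟨a, ha⟩ := hne
  have hT₁ : T ⊆ convexHull k t₁ := fun p hp ↦ (hT hp).resolve_left (h p hp)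
  exact hd.ne_of_mem (subset_affineSpan k _ ha)
    (convexHull_subset_affineSpan _ (convexHull_min hT₁ (convex_convexHull k _) (ht₀ ha))) rfl

def integerLattice (ι : Type*) : AddSubgroup (ι → ℝ) :=
  AddSubgroup.pi univ fun _ ↦ (Int.castAddHom ℝ).range

theorem mem_integerLattice {ι : Type*} {x : ι → ℝ} :
    x ∈ integerLattice ι ↔ ∀ i, ∃ m : ℤ, x i = m := by
  simp only [integerLattice, AddSubgroup.mem_pi, mem_univ, true_implies, AddMonoidHom.mem_range,
    Int.coe_castAddHom, eq_comm]

theorem add_natCast_smul_mem_integerLattice {ι : Type*} {v w : ι → ℝ}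
    (hv : v ∈ integerLattice ι) (hw : w ∈ integerLattice ι) (r : ℕ) :
    v + (r : ℝ) • w ∈ integerLattice ι := by
  simpa only [Nat.cast_smul_eq_nsmul] using add_mem hv (nsmul_mem hw r)

theorem lineMap_add_smul_inv {k E : Type*} [Field k] [AddCommGroup E] [Module k E]
    (v w₀ w₁ : E) {r : k} (hr : r ≠ 0) :
    lineMap (v + r • w₀) (v + r • w₁) r⁻¹ = v + r • w₀ + (w₁ - w₀) := by
  rw [lineMap_apply_module', add_sub_add_left_eq_sub, ← smul_sub, smul_smul, inv_mul_cancel₀ hr,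
    one_smul, add_comm]

theorem lineMap_add_smul_inv_mem_integerLattice {ι : Type*} {v w₀ w₁ : ι → ℝ}
    (hv : v ∈ integerLattice ι) (hw₀ : w₀ ∈ integerLattice ι) (hw₁ : w₁ ∈ integerLattice ι)
    {r : ℕ} (hr : r ≠ 0) :
    lineMap (v + (r : ℝ) • w₀) (v + (r : ℝ) • w₁) (r : ℝ)⁻¹ ∈ integerLattice ι := by
  rw [lineMap_add_smul_inv v w₀ w₁ (Nat.cast_ne_zero.2 hr)]
  exact add_mem (add_natCast_smul_mem_integerLattice hv hw₀ r) (sub_mem hw₁ hw₀)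

theorem stmt_9_general (n : ℕ) (s : Finset (Fin n → ℝ))
    (hind : AffineIndependent ℝ (fun p : s => (p : Fin n → ℝ)))
    (t0 t1 : Finset (Fin n → ℝ)) (ht0 : t0 ⊆ s) (ht1 : t1 ⊆ s)
    (ht0ne : t0.Nonempty) (ht1ne : t1.Nonempty)
    (hdisj : Disjoint t0 t1)
    (hcover : {x ∈ convexHull ℝ (s : Set (Fin n → ℝ)) | ∀ i, ∃ m : ℤ, x i = (m : ℝ)} ⊆
      convexHull ℝ (t0 : Set (Fin n → ℝ)) ∪ convexHull ℝ (t1 : Set (Fin n → ℝ))) :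
    ¬ ∃ (S : Finset (Fin n → ℝ)) (v : Fin n → ℝ) (r : ℕ),
        (∀ x ∈ S, ∀ i, ∃ m : ℤ, x i = (m : ℝ)) ∧
        (∀ i, ∃ m : ℤ, v i = (m : ℝ)) ∧ 2 ≤ r ∧
        convexHull ℝ (s : Set (Fin n → ℝ)) =
          (fun x => v + (r : ℝ) • x) '' convexHull ℝ (S : Set (Fin n → ℝ)) := by
  rintro ⟨S, v, r, hSlat, hvlat, hr, hP⟩
  set g : (Fin n → ℝ) → (Fin n → ℝ) := fun x => v + (r : ℝ) • x
  have hv : v ∈ integerLattice (Fin n) := mem_integerLattice.2 hvlat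
  have hS : ∀ w ∈ S, w ∈ integerLattice (Fin n) := fun w hw ↦ mem_integerLattice.2 (hSlat w hw)
  have hspan : Disjoint (affineSpan ℝ (t0 : Set (Fin n → ℝ)) : Set (Fin n → ℝ))
      (affineSpan ℝ (t1 : Set (Fin n → ℝ))) :=
    hind.disjoint_affineSpan_of_subset ht0 ht1 (Finset.disjoint_coe.2 hdisj)
  have hgS_cover : g '' S ⊆ convexHull ℝ t0 ∪ convexHull ℝ t1 := by
    rintro _ ⟨w, hw, rfl⟩
    exact hcover ⟨hP ▸ mem_image_of_mem g (subset_convexHull ℝ _ hw),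
      mem_integerLattice.1 (add_natCast_smul_mem_integerLattice hv (hS w hw) r)⟩
  have hsub : ∀ t : Finset (Fin n → ℝ), t ⊆ s → (t : Set (Fin n → ℝ)) ⊆ convexHull ℝ (g '' S) :=
    fun t ht ↦ (hP.trans (image_add_smul_convexHull v _ _)) ▸
      (Finset.coe_subset.2 ht).trans (subset_convexHull ℝ _)
  obtain ⟨_, ⟨w₀, hw₀, rfl⟩, hp₀⟩ :=
    exists_mem_inter_convexHull_of_subset_union hgS_cover (hsub t0 ht0) ht0ne hspan
  obtain ⟨_, ⟨w₁, hw₁, rfl⟩, hp₁⟩ := exists_mem_inter_convexHull_of_subset_union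
    ((union_comm _ _).subst hgS_cover) (hsub t1 ht1) ht1ne hspan.symm
  have hr₁ : (1 : ℝ) < r := by exact_mod_cast hr
  have hx_mem : lineMap (g w₀) (g w₁) (r : ℝ)⁻¹ ∈ convexHull ℝ (s : Set (Fin n → ℝ)) :=
    (convex_convexHull ℝ _).lineMap_mem (convexHull_mono ht0 hp₀) (convexHull_mono ht1 hp₁)
      ⟨by positivity, inv_le_one_of_one_le₀ hr₁.le⟩
  have hx_lattice := lineMap_add_smul_inv_mem_integerLattice hv (hS w₀ hw₀) (hS w₁ hw₁)
    (by omega : r ≠ 0)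
  refine AffineSubspace.lineMap_notMem_union_of_disjoint hspan
    (convexHull_subset_affineSpan _ hp₀) (convexHull_subset_affineSpan _ hp₁)
    (inv_ne_zero (by positivity)) (inv_ne_one.2 hr₁.ne') ?_
  exact union_subset_union (convexHull_subset_affineSpan _) (convexHull_subset_affineSpan _)
    (hcover ⟨hx_mem, mem_integerLattice.1 hx_lattice⟩)

/-- A lattice simplex `P = conv(s)` with positive lattice defect (two disjoint faces
`conv(t0)`, `conv(t1)` covering all lattice points of `P`) cannot be a nontrivial multiple
`v + r • conv(S)` of a lattice polytope with `r ≥ 2`. -/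
theorem stmt_9 (n : ℕ) (s : Finset (Fin n → ℝ))
    (hlat : ∀ x ∈ s, ∀ i, ∃ m : ℤ, x i = (m : ℝ))
    (hcard : s.card = n + 1)
    (hind : AffineIndependent ℝ (fun p : s => (p : Fin n → ℝ)))
    (t0 t1 : Finset (Fin n → ℝ)) (ht0 : t0 ⊆ s) (ht1 : t1 ⊆ s)
    (ht0ne : t0.Nonempty) (ht1ne : t1.Nonempty)
    (hdisj : Disjoint t0 t1) (hunion : t0 ∪ t1 = s)
    (hcover : {x ∈ convexHull ℝ (s : Set (Fin n → ℝ)) | ∀ i, ∃ m : ℤ, x i = (m : ℝ)} ⊆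
      convexHull ℝ (t0 : Set (Fin n → ℝ)) ∪ convexHull ℝ (t1 : Set (Fin n → ℝ))) :
    ¬ ∃ (S : Finset (Fin n → ℝ)) (v : Fin n → ℝ) (r : ℕ),
        (∀ x ∈ S, ∀ i, ∃ m : ℤ, x i = (m : ℝ)) ∧
        (∀ i, ∃ m : ℤ, v i = (m : ℝ)) ∧ 2 ≤ r ∧
        convexHull ℝ (s : Set (Fin n → ℝ)) =
          (fun x => v + (r : ℝ) • x) '' convexHull ℝ (S : Set (Fin n → ℝ)) :=
  stmt_9_general n s hind t0 t1 ht0 ht1 ht0ne ht1ne hdisj hcover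
end

section
/- Let K be a field, let H be a k×k matrix over K, and let S ⊆ {1, …, k} be a subset with |S| = k − l such that the principal submatrix H_{S,S} (rows and columns indexed by S) is invertible. Let E be the k×l matrix whose columns are the distinct standard basis vectors e_j for j in the complement of S. Then the (k+l)×(k+l) block matrix [[H, E], [Eᵀ, 0]] is invertible; in particular any matrix containing it as a submatrix has rank at least k + l. -/
open Matrix

/-- Kernel triviality for the block matrix. -/
lemma stmt_11_kernel (K : Type*) [Field K] (k l : ℕ)
    (H : Matrix (Fin k) (Fin k) K) (S : Finset (Fin k))
    (hS : IsUnit (H.submatrix (fun i : {i // i ∈ S} => (i : Fin k))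
      (fun i : {i // i ∈ S} => (i : Fin k))))
    (c : Fin l → Fin k) (hcinj : Function.Injective c)
    (hcrange : Set.range c = ((S : Set (Fin k)))ᶜ)
    (E : Matrix (Fin k) (Fin l) K)
    (hE : ∀ i j, E i j = if c j = i then 1 else 0)
    (x : Fin k → K) (y : Fin l → K)
    (htop : H *ᵥ x + E *ᵥ y = 0) (hbot : Eᵀ *ᵥ x = 0) :
    x = 0 ∧ y = 0 := by
  have hxoff : ∀ i : Fin k, i ∉ S → x i = 0 := by
    intro i hi
    have : i ∈ Set.range c := by rw [hcrange]; simpa using hi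
    obtain ⟨j, rfl⟩ := this
    have := congrFun hbot j
    simpa [Matrix.mulVec, dotProduct, Matrix.transpose_apply, hE, ite_mul] using this
  have hEy : ∀ i ∈ S, (E *ᵥ y) i = 0 := by
    intro i hi
    have h0 : ∀ j, E i j = 0 := by
      intro j
      rw [hE]
      have : c j ≠ i := by
        intro h
        have : i ∈ Set.range c := ⟨j, h⟩
        rw [hcrange] at this; exact this hi
      simp [this]
    simp [Matrix.mulVec, dotProduct, h0]
  have hx0 : x = 0 := by
    set A := H.submatrix (fun i : {i // i ∈ S} => (i : Fin k))
      (fun i : {i // i ∈ S} => (i : Fin k)) with hA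
    have hAx : A *ᵥ (fun i : {i // i ∈ S} => x i) = 0 := by
      funext i
      have h1 := congrFun htop (i : Fin k)
      have h2 : (H *ᵥ x) (i : Fin k) = 0 := by
        have := hEy i i.2
        simpa [this] using h1
      calc (A *ᵥ fun i : {i // i ∈ S} => x i) i
          = ∑ j : {j // j ∈ S}, H i j * x j := rfl
        _ = ∑ j ∈ S, H i j * x j := Finset.sum_coe_sort S (fun j => H (i:Fin k) j * x j)
        _ = ∑ j : Fin k, H i j * x j :=
            Finset.sum_subset S.subset_univ (fun j _ hj => by simp [hxoff j hj])
        _ = (H *ᵥ x) i := rfl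
        _ = 0 := h2
    have hdetA : A.det ≠ 0 := by
      simpa [Matrix.isUnit_iff_isUnit_det, isUnit_iff_ne_zero] using hS
    have hx' : (fun i : {i // i ∈ S} => x i) = 0 := by
      by_contra h
      exact hdetA (Matrix.exists_mulVec_eq_zero_iff.mp ⟨_, h, hAx⟩)
    funext i
    by_cases hi : i ∈ S
    · exact congrFun hx' ⟨i, hi⟩
    · exact hxoff i hi
  refine ⟨hx0, ?_⟩
  have hEy0 : E *ᵥ y = 0 := by simpa [hx0] using htop
  funext j
  have := congrFun hEy0 (c j)
  simpa [Matrix.mulVec, dotProduct, hE, hcinj.eq_iff, ite_mul] using this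

lemma stmt_11_submatrix_eq (K : Type*) [Field K] {m n p q : Type*} [Fintype m] [Fintype n]
    [Fintype p] [Fintype q] [DecidableEq p] [DecidableEq q]
    (N : Matrix p q K) (f : m → p) (g : n → q) :
    N.submatrix f g
      = ((1 : Matrix p p K).submatrix f id) * N * ((1 : Matrix q q K).submatrix id g) := by
  ext a b
  simp [Matrix.mul_apply, Matrix.one_apply, Finset.sum_ite_eq, Finset.sum_ite_eq']

lemma stmt_11_rank_submatrix_le (K : Type*) [Field K] {m n p q : Type*} [Fintype m] [Fintype n]
    [Fintype p] [Fintype q] [DecidableEq p] [DecidableEq q]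
    (N : Matrix p q K) (f : m → p) (g : n → q) :
    (N.submatrix f g).rank ≤ N.rank := by
  rw [stmt_11_submatrix_eq]
  exact le_trans (Matrix.rank_mul_le_left _ _) (Matrix.rank_mul_le_right _ _)

/-- If `H` is a `k × k` matrix with an invertible principal submatrix `H_{S,S}` of order
`k - l`, and `E` is the `k × l` matrix whose columns are the distinct standard basis vectors
indexed by the complement of `S`, then the block matrix `[[H, E], [E.transpose, 0]]` is invertible;
in particular any matrix containing it as a submatrix has rank at least `k + l`. -/
theorem stmt_11 (K : Type*) [Field K] (k l : ℕ) (hlk : l ≤ k)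
    (H : Matrix (Fin k) (Fin k) K) (S : Finset (Fin k)) (hScard : S.card = k - l)
    (hS : IsUnit (H.submatrix (fun i : {i // i ∈ S} => (i : Fin k))
      (fun i : {i // i ∈ S} => (i : Fin k))))
    (c : Fin l → Fin k) (hcinj : Function.Injective c)
    (hcrange : Set.range c = ((S : Set (Fin k)))ᶜ)
    (E : Matrix (Fin k) (Fin l) K)
    (hE : ∀ i j, E i j = if c j = i then 1 else 0) :
    IsUnit (Matrix.fromBlocks H E E.transpose (0 : Matrix (Fin l) (Fin l) K)) ∧
    ∀ (p q : Type) (_ : Fintype p) (_ : Fintype q) (_ : DecidableEq p) (_ : DecidableEq q)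
      (N : Matrix p q K) (f : Fin k ⊕ Fin l → p) (g : Fin k ⊕ Fin l → q),
      Function.Injective f → Function.Injective g →
      N.submatrix f g = Matrix.fromBlocks H E E.transpose (0 : Matrix (Fin l) (Fin l) K) →
      k + l ≤ N.rank := by
  set M := Matrix.fromBlocks H E E.transpose (0 : Matrix (Fin l) (Fin l) K) with hM
  have hunit : IsUnit M := by
    rw [Matrix.isUnit_iff_isUnit_det, isUnit_iff_ne_zero]
    intro hdet
    obtain ⟨v, hv0, hv⟩ := Matrix.exists_mulVec_eq_zero_iff.mpr hdet
    set x : Fin k → K := v ∘ Sum.inl with hx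
    set y : Fin l → K := v ∘ Sum.inr with hy
    have hvelim : v = Sum.elim x y := by funext i; cases i <;> rfl
    rw [hvelim, hM, Matrix.fromBlocks_mulVec] at hv
    have htop : H *ᵥ x + E *ᵥ y = 0 := funext fun i => congrFun hv (Sum.inl i)
    have hbot : Eᵀ *ᵥ x = 0 := by
      funext j
      have := congrFun hv (Sum.inr j)
      simpa [Matrix.zero_mulVec] using this
    obtain ⟨hx0, hy0⟩ := stmt_11_kernel K k l H S hS c hcinj hcrange E hE x y htop hbot
    exact hv0 (by rw [hvelim, hx0, hy0]; funext i; cases i <;> rfl)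
  refine ⟨hunit, ?_⟩
  intro p q _ _ _ _ N f g hf hg hsub
  have h1 : M.rank = k + l := by
    rw [Matrix.rank_of_isUnit M hunit]
    simp [Fintype.card_sum]
  calc k + l = M.rank := h1.symm
    _ = (N.submatrix f g).rank := by rw [hsub]
    _ ≤ N.rank := stmt_11_rank_submatrix_le K N f g
end
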